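/- Let n ≥ 1, λ ∈ ℝ, ρ ∈ [0,1], and let S be a simple graph with vertex set V(S) ⊆ [n], edge set E(S), and no isolated vertices, its edges (i,j) being pairs with i < j. Then, for Y distributed according to the planted submatrix measure P_{λ, ρ, n}: E[∏_{(i,j) ∈ E(S)} Y_{ij}] = λ^{|E(S)|} · ρ^{|V(S)|}. -/

import Mathlib

open MeasureTheory ProbabilityTheory Filter
open scoped ENNReal NNReal

/-- Bernoulli(p) law on ℝ (mass p at 1, mass 1-p at 0). -/
noncomputable def bernoulliReal (p : ℝ) : Measure ℝ :=
  ENNReal.ofReal p • Measure.dirac 1 + ENNReal.ofReal (1 - p) • Measure.dirac 0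

/-- Index set of the entries of a symmetric `n × n` matrix: pairs `(i,j)` with `i ≤ j`. -/
abbrev SymIdx (n : ℕ) := {p : Fin n × Fin n // p.1 ≤ p.2}

/-- Index set of unordered pairs `{i,j} ⊆ [n]`, encoded as pairs `(i,j)` with `i < j`. -/
abbrev PairIdx (n : ℕ) := {p : Fin n × Fin n // p.1 < p.2}

/-- The noise law `Q_n`: a symmetric Gaussian matrix with `N(0,1)` off-diagonal
entries and `N(0,2)` diagonal entries. -/
noncomputable def noiseMeasure (n : ℕ) : Measure (SymIdx n → ℝ) :=
  Measure.pi fun e => gaussianReal 0 (if e.1.1 = e.1.2 then 2 else 1)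

/-- The planted submatrix measure `P_{λ,ρ,n}`: the law of `Y = λ θ θᵀ + W` with
`θ` having i.i.d. Bernoulli(ρ) entries and `W ∼ Q_n` independent of `θ`. -/
noncomputable def plantedSubmatrix (lam ρ : ℝ) (n : ℕ) : Measure (SymIdx n → ℝ) :=
  ((Measure.pi fun _ : Fin n => bernoulliReal ρ).prod (noiseMeasure n)).map
    (fun p e => lam * p.1 e.1.1 * p.1 e.1.2 + p.2 e)

/-!
Expand `∏_{e ∈ E(S)} (λ θ_i θ_j + W_e)` over the subsets `T ⊆ E(S)`. After integrating out the
noise, every term with `T ≠ E(S)` carries a product of distinct independent centred Gaussian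
entries and vanishes, so only `λ^{|E(S)|} E[∏_e θ_i θ_j] = λ^{|E(S)|} E[∏_v θ_v ^ deg v]` remains.
A Bernoulli variable has `E[θ^k] = ρ` for every `k ≥ 1`, and since `S` has no isolated vertices
the vertices of positive degree are exactly those of `S`.
-/

open Finset

section Pi

variable {ι E 𝕜 : Type*} [Fintype ι] [MeasurableSpace E] [RCLike 𝕜]
  {μ : ι → Measure E}

lemma integrable_finset_prod_pi [∀ i, IsFiniteMeasure (μ i)] (s : Finset ι) {f : ι → E → 𝕜}
    (hf : ∀ i ∈ s, Integrable (f i) (μ i)) :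
    Integrable (fun x => ∏ i ∈ s, f i (x i)) (Measure.pi μ) := by
  classical
  simp_rw [← Fintype.prod_ite_mem s]
  refine Integrable.fintype_prod (𝕜 := 𝕜) (μ := μ)
    (f := fun i y => if i ∈ s then f i y else 1) fun i => ?_
  by_cases hi : i ∈ s
  · simpa [hi] using hf i hi
  · simp [hi]

lemma integral_finset_prod_pi [∀ i, IsProbabilityMeasure (μ i)] (s : Finset ι) (f : ι → E → 𝕜) :
    ∫ x, ∏ i ∈ s, f i (x i) ∂Measure.pi μ = ∏ i ∈ s, ∫ y, f i y ∂μ i := by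
  classical
  simp_rw [← Fintype.prod_ite_mem s,
    integral_fintype_prod_eq_prod (fun i y => if i ∈ s then f i y else 1)]
  refine Fintype.prod_congr _ _ fun i => ?_
  by_cases hi : i ∈ s <;> simp [hi]

lemma integral_finset_prod_pi_gaussianReal_zero (v : ι → ℝ≥0) {s : Finset ι}
    (hs : s.Nonempty) :
    ∫ x, ∏ i ∈ s, x i ∂Measure.pi (fun i => gaussianReal 0 (v i)) = 0 := by
  rw [integral_finset_prod_pi s (fun _ y => y)]
  obtain ⟨i, hi⟩ := hs
  exact prod_eq_zero hi integral_id_gaussianReal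

end Pi

lemma prod_comp_eq_prod_pow_card {α β M : Type*} [Fintype β] [DecidableEq β] [CommMonoid M]
    (s : Finset α) (g : α → β) (f : β → M) :
    ∏ a ∈ s, f (g a) = ∏ b, f b ^ #{a ∈ s | g a = b} := by
  rw [← prod_fiberwise s g]
  refine Fintype.prod_congr _ _ fun b => ?_
  rw [← prod_const]
  exact prod_congr rfl fun a ha => by rw [(mem_filter.1 ha).2]

section Bernoulli

variable {p : ℝ}

instance : IsFiniteMeasure (bernoulliReal p) := by
  constructor
  simp [bernoulliReal, ENNReal.add_lt_top]

lemma isProbabilityMeasure_bernoulliReal (h0 : 0 ≤ p) (h1 : p ≤ 1) :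
    IsProbabilityMeasure (bernoulliReal p) := by
  constructor
  simp [bernoulliReal, ← ENNReal.ofReal_add h0 (sub_nonneg.2 h1)]

lemma integrable_bernoulliReal (f : ℝ → ℝ) : Integrable f (bernoulliReal p) :=
  ((integrable_dirac enorm_lt_top).smul_measure ENNReal.ofReal_ne_top).add_measure
    ((integrable_dirac enorm_lt_top).smul_measure ENNReal.ofReal_ne_top)

lemma integral_bernoulliReal (h0 : 0 ≤ p) (h1 : p ≤ 1) (f : ℝ → ℝ) :
    ∫ x, f x ∂bernoulliReal p = p * f 1 + (1 - p) * f 0 := by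
  rw [bernoulliReal, integral_add_measure
      ((integrable_dirac enorm_lt_top).smul_measure ENNReal.ofReal_ne_top)
      ((integrable_dirac enorm_lt_top).smul_measure ENNReal.ofReal_ne_top),
    integral_smul_measure, integral_smul_measure, integral_dirac, integral_dirac,
    ENNReal.toReal_ofReal h0, ENNReal.toReal_ofReal (sub_nonneg.2 h1), smul_eq_mul, smul_eq_mul]

lemma integral_pow_bernoulliReal (h0 : 0 ≤ p) (h1 : p ≤ 1) {k : ℕ} (hk : k ≠ 0) :
    ∫ x, x ^ k ∂bernoulliReal p = p := by
  simp [integral_bernoulliReal h0 h1, zero_pow hk]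

end Bernoulli

variable {n : ℕ}

def PairIdx.degree (T : Finset (PairIdx n)) (v : Fin n) : ℕ :=
  #{e ∈ T | e.1.1 = v} + #{e ∈ T | e.1.2 = v}

lemma PairIdx.prod_edges_eq_prod_pow_degree (T : Finset (PairIdx n)) (θ : Fin n → ℝ) :
    ∏ e ∈ T, θ e.1.1 * θ e.1.2 = ∏ v, θ v ^ PairIdx.degree T v := by
  simp_rw [prod_mul_distrib, prod_comp_eq_prod_pow_card T (fun e => e.1.1),
    prod_comp_eq_prod_pow_card T (fun e => e.1.2), ← prod_mul_distrib, ← pow_add,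
    PairIdx.degree]

lemma PairIdx.degree_eq_zero_iff (T : Finset (PairIdx n)) (v : Fin n) :
    PairIdx.degree T v = 0 ↔ ∀ e ∈ T, e.1.1 ≠ v ∧ e.1.2 ≠ v := by
  simp [PairIdx.degree, filter_eq_empty_iff, forall_and]

lemma integral_prod_edges_bernoulli {ρ : ℝ} (h0 : 0 ≤ ρ) (h1 : ρ ≤ 1)
    {VS : Finset (Fin n)} {ES : Finset (PairIdx n)}
    (hinc : ∀ e ∈ ES, e.1.1 ∈ VS ∧ e.1.2 ∈ VS)
    (hnoiso : ∀ v ∈ VS, ∃ e ∈ ES, v = e.1.1 ∨ v = e.1.2) :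
    ∫ θ, ∏ e ∈ ES, θ e.1.1 * θ e.1.2 ∂Measure.pi (fun _ => bernoulliReal ρ)
      = ρ ^ #VS := by
  have := isProbabilityMeasure_bernoulliReal h0 h1
  have hdeg : ∀ v, PairIdx.degree ES v = 0 ↔ v ∉ VS := by
    intro v
    rw [PairIdx.degree_eq_zero_iff]
    constructor
    · intro h hv
      obtain ⟨e, he, rfl | rfl⟩ := hnoiso v hv
      exacts [(h e he).1 rfl, (h e he).2 rfl]
    · intro hv e he
      exact ⟨fun h => hv (h ▸ (hinc e he).1), fun h => hv (h ▸ (hinc e he).2)⟩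
  simp_rw [PairIdx.prod_edges_eq_prod_pow_degree,
    integral_fintype_prod_eq_prod (fun v x => x ^ PairIdx.degree ES v)]
  rw [← prod_const, ← Fintype.prod_ite_mem VS]
  refine Fintype.prod_congr _ _ fun v => ?_
  by_cases hv : v ∈ VS
  · rw [if_pos hv, integral_pow_bernoulliReal h0 h1 (mt (hdeg v).1 (not_not.2 hv))]
  · simp [hv, (hdeg v).2 hv]

def PairIdx.toSymIdx : PairIdx n ↪ SymIdx n :=
  ⟨fun e => ⟨e.1, e.2.le⟩, fun _ _ h => Subtype.ext (congrArg (fun u : SymIdx n => u.1) h)⟩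

instance : IsProbabilityMeasure (noiseMeasure n) := by
  unfold noiseMeasure; infer_instance

lemma integral_prod_edges_noiseMeasure_eq_zero {s : Finset (PairIdx n)} (hs : s.Nonempty) :
    ∫ w, ∏ e ∈ s, w (PairIdx.toSymIdx e) ∂noiseMeasure n = 0 := by
  simp_rw [← prod_map s PairIdx.toSymIdx]
  exact integral_finset_prod_pi_gaussianReal_zero _ hs.map

lemma integrable_prod_edges_noiseMeasure (s : Finset (PairIdx n)) :
    Integrable (fun w => ∏ e ∈ s, w (PairIdx.toSymIdx e)) (noiseMeasure n) := by
  simp_rw [← prod_map s PairIdx.toSymIdx]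
  exact integrable_finset_prod_pi _ fun u _ => (memLp_id_gaussianReal 1).integrable le_rfl

lemma integrable_prod_edges_bernoulli (ρ : ℝ) (T : Finset (PairIdx n)) :
    Integrable (fun θ => ∏ e ∈ T, θ e.1.1 * θ e.1.2)
      (Measure.pi fun _ => bernoulliReal ρ) := by
  simp_rw [PairIdx.prod_edges_eq_prod_pow_degree]
  exact Integrable.fintype_prod fun _ => integrable_bernoulliReal _

theorem integral_plantedSubmatrix_prod_edges (lam ρ : ℝ) (ES : Finset (PairIdx n)) :
    ∫ y, ∏ e ∈ ES, y (PairIdx.toSymIdx e) ∂plantedSubmatrix lam ρ n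
      = lam ^ #ES
        * ∫ θ, ∏ e ∈ ES, θ e.1.1 * θ e.1.2 ∂Measure.pi fun _ => bernoulliReal ρ := by
  set μθ := Measure.pi fun _ : Fin n => bernoulliReal ρ
  have hmeas : Measurable fun p : (Fin n → ℝ) × (SymIdx n → ℝ) => fun e : SymIdx n =>
      lam * p.1 e.1.1 * p.1 e.1.2 + p.2 e :=
    measurable_pi_lambda _ fun e => by fun_prop
  have hsplit : ∀ (T : Finset (PairIdx n)) (θ : Fin n → ℝ),
      ∏ e ∈ T, lam * θ e.1.1 * θ e.1.2 = lam ^ #T * ∏ e ∈ T, θ e.1.1 * θ e.1.2 := by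
    intro T θ
    simp_rw [mul_assoc]
    rw [prod_mul_distrib, prod_const]
  have hterm : ∀ T : Finset (PairIdx n),
      Integrable (fun θ => ∏ e ∈ T, lam * θ e.1.1 * θ e.1.2) μθ := by
    intro T
    simp_rw [hsplit]
    exact (integrable_prod_edges_bernoulli ρ T).const_mul _
  calc ∫ y, ∏ e ∈ ES, y (PairIdx.toSymIdx e) ∂plantedSubmatrix lam ρ n
      = ∫ p, ∏ e ∈ ES, (lam * p.1 e.1.1 * p.1 e.1.2 + p.2 (PairIdx.toSymIdx e))
          ∂μθ.prod (noiseMeasure n) := by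
        have hF : Measurable fun y : SymIdx n → ℝ => ∏ e ∈ ES, y (PairIdx.toSymIdx e) :=
          Finset.measurable_prod _ fun e _ => measurable_pi_apply _
        rw [plantedSubmatrix, integral_map hmeas.aemeasurable hF.aestronglyMeasurable]
        rfl
    _ = ∑ T ∈ ES.powerset, ∫ p, (∏ e ∈ T, lam * p.1 e.1.1 * p.1 e.1.2)
          * ∏ e ∈ ES \ T, p.2 (PairIdx.toSymIdx e) ∂μθ.prod (noiseMeasure n) := by
        simp_rw [prod_add]
        exact integral_finsetSum _ fun T _ =>
          (hterm T).mul_prod (integrable_prod_edges_noiseMeasure _)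
    _ = ∑ T ∈ ES.powerset, (∫ θ, ∏ e ∈ T, lam * θ e.1.1 * θ e.1.2 ∂μθ)
          * ∫ w, ∏ e ∈ ES \ T, w (PairIdx.toSymIdx e) ∂noiseMeasure n :=
        sum_congr rfl fun T _ => integral_prod_mul
          (f := fun θ : Fin n → ℝ => ∏ e ∈ T, lam * θ e.1.1 * θ e.1.2)
          (g := fun w : SymIdx n → ℝ => ∏ e ∈ ES \ T, w (PairIdx.toSymIdx e))
    _ = ∫ θ, ∏ e ∈ ES, lam * θ e.1.1 * θ e.1.2 ∂μθ := by
        rw [sum_eq_single_of_mem ES (mem_powerset_self ES)]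
        · simp
        · intro T hT hne
          rw [integral_prod_edges_noiseMeasure_eq_zero, mul_zero]
          exact sdiff_nonempty.2 fun h => hne (subset_antisymm (mem_powerset.1 hT) h)
    _ = lam ^ #ES * ∫ θ, ∏ e ∈ ES, θ e.1.1 * θ e.1.2 ∂μθ := by
        simp_rw [hsplit, integral_const_mul]

theorem statement11_general (n : ℕ) (lam ρ : ℝ) (hρ : ρ ∈ Set.Icc (0:ℝ) 1)
    (VS : Finset (Fin n)) (ES : Finset (PairIdx n))
    (hinc : ∀ e ∈ ES, e.1.1 ∈ VS ∧ e.1.2 ∈ VS)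
    (hnoiso : ∀ v ∈ VS, ∃ e ∈ ES, v = e.1.1 ∨ v = e.1.2) :
    ∫ y, ∏ e ∈ ES, y (⟨e.1, le_of_lt e.2⟩ : SymIdx n) ∂(plantedSubmatrix lam ρ n)
      = lam ^ ES.card * ρ ^ VS.card :=
  (integral_plantedSubmatrix_prod_edges lam ρ ES).trans
    (congrArg _ (integral_prod_edges_bernoulli hρ.1 hρ.2 hinc hnoiso))

/-- expectation of the edge product under the planted submatrix measure:
`E[∏_{(i,j) ∈ E(S)} Y_{ij}] = λ^{|E(S)|} ρ^{|V(S)|}` for any simple graph `S` (edges being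
pairs `i < j`, vertex set `VS ⊆ [n]`) with no isolated vertices. -/
theorem statement11 (n : ℕ) (hn : 1 ≤ n) (lam ρ : ℝ) (hρ : ρ ∈ Set.Icc (0:ℝ) 1)
    (VS : Finset (Fin n)) (ES : Finset (PairIdx n))
    (hinc : ∀ e ∈ ES, e.1.1 ∈ VS ∧ e.1.2 ∈ VS)
    (hnoiso : ∀ v ∈ VS, ∃ e ∈ ES, v = e.1.1 ∨ v = e.1.2) :
    ∫ y, ∏ e ∈ ES, y (⟨e.1, le_of_lt e.2⟩ : SymIdx n) ∂(plantedSubmatrix lam ρ n)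
      = lam ^ ES.card * ρ ^ VS.card :=
  statement11_general n lam ρ hρ VS ES hinc hnoiso
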